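/- Correctness of the Pruning-on-the-Right rule: if the temporal k-core T^k_[ts,te] has tightest time interval [ts',te'] with te' < te, then for every end time c with te' ≤ c < te, the temporal k-core T^k_[ts,c] is identical to T^k_[ts,te]. -/

import Mathlib

abbrev TEdge : Type := ℕ × ℕ × ℤ

/-- Projection of a temporal edge set over time interval [a,b]. -/
def projE (E : Finset TEdge) (a b : ℤ) : Finset TEdge :=
  E.filter (fun e => a ≤ e.2.2 ∧ e.2.2 ≤ b)

def verts (E : Finset TEdge) : Finset ℕ :=
  E.image (fun e => e.1) ∪ E.image (fun e => e.2.1)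

/-- Distinct neighbors of `v` inside vertex set `S` via edges of `E`. -/
def nbrs (E : Finset TEdge) (S : Finset ℕ) (v : ℕ) : Finset ℕ :=
  S.filter (fun u => u ≠ v ∧
    (E.filter (fun e => (e.1 = u ∧ e.2.1 = v) ∨ (e.1 = v ∧ e.2.1 = u))).Nonempty)

/-- `S` is a `k`-core candidate: every vertex of `S` has ≥ k distinct neighbors in `S`. -/
def isCoreSet (E : Finset TEdge) (k : ℕ) (S : Finset ℕ) : Prop :=
  ∀ v ∈ S, k ≤ (nbrs E S v).card

instance (E : Finset TEdge) (k : ℕ) : DecidablePred (isCoreSet E k) := fun S => by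
  unfold isCoreSet; infer_instance

/-- The `k`-core vertex set of a temporal edge set: union of all candidates. -/
def core (E : Finset TEdge) (k : ℕ) : Finset ℕ :=
  ((verts E).powerset.filter (isCoreSet E k)).sup id

/-- The edges of `E` induced among the `k`-core vertices. -/
def coreEdges (E : Finset TEdge) (k : ℕ) : Finset TEdge :=
  E.filter (fun e => e.1 ∈ core E k ∧ e.2.1 ∈ core E k)

/-- Vertices of the temporal k-core of interval [a,b]. -/
def coreV (E : Finset TEdge) (k : ℕ) (a b : ℤ) : Finset ℕ :=
  core (projE E a b) k

/-- Temporal edges of the temporal k-core of interval [a,b]. -/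
def coreE (E : Finset TEdge) (k : ℕ) (a b : ℤ) : Finset TEdge :=
  coreEdges (projE E a b) k

/-- Two intervals induce identical temporal k-cores (same vertices and temporal edges). -/
def identCore (E : Finset TEdge) (k : ℕ) (a b a' b' : ℤ) : Prop :=
  coreV E k a b = coreV E k a' b' ∧ coreE E k a b = coreE E k a' b'

/-! Every temporal edge of the core of `[ts, te]` has its timestamp in `[ts, te'] ⊆ [ts, c]`.
Passing from an edge set `E` to a subset `E'` that still contains all core edges of `E` does
not change the core: each core vertex finds its neighbours through core edges, so the core of
`E` remains a `k`-core candidate in `E'`, and conversely cores are monotone in the edge set. -/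

lemma mem_verts {E : Finset TEdge} {v : ℕ} :
    v ∈ verts E ↔ ∃ e ∈ E, e.1 = v ∨ e.2.1 = v := by
  simp only [verts, Finset.mem_union, Finset.mem_image]
  grind

lemma verts_mono {E E' : Finset TEdge} (hE : E ⊆ E') : verts E ⊆ verts E' :=
  Finset.union_subset_union (Finset.image_subset_image hE) (Finset.image_subset_image hE)

lemma nbrs_mono {E E' : Finset TEdge} (hE : E ⊆ E') (S : Finset ℕ) (v : ℕ) :
    nbrs E S v ⊆ nbrs E' S v :=
  Finset.monotone_filter_right S fun _ _ ⟨hne, hedge⟩ =>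
    ⟨hne, hedge.mono (Finset.filter_subset_filter _ hE)⟩

lemma isCoreSet.mono {E E' : Finset TEdge} {k : ℕ} {S : Finset ℕ} (hS : isCoreSet E k S)
    (hE : E ⊆ E') : isCoreSet E' k S :=
  fun v hv => (hS v hv).trans (Finset.card_le_card (nbrs_mono hE S v))

lemma mem_core_iff {E : Finset TEdge} {k v : ℕ} :
    v ∈ core E k ↔ ∃ C ⊆ verts E, isCoreSet E k C ∧ v ∈ C := by
  simp only [core, Finset.mem_sup, Finset.mem_filter, Finset.mem_powerset, id]
  tauto

lemma subset_core {E : Finset TEdge} {k : ℕ} {C : Finset ℕ} (hC : C ⊆ verts E)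
    (hcore : isCoreSet E k C) : C ⊆ core E k :=
  fun _ hv => mem_core_iff.mpr ⟨C, hC, hcore, hv⟩

lemma core_subset_verts (E : Finset TEdge) (k : ℕ) : core E k ⊆ verts E := by
  intro v hv
  obtain ⟨C, hC, -, hvC⟩ := mem_core_iff.mp hv
  exact hC hvC

lemma isCoreSet_core (E : Finset TEdge) (k : ℕ) : isCoreSet E k (core E k) := by
  intro v hv
  obtain ⟨C, hC, hcore, hvC⟩ := mem_core_iff.mp hv
  exact (hcore v hvC).trans
    (Finset.card_le_card (Finset.monotone_filter_left _ (subset_core hC hcore)))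

lemma core_mono {E E' : Finset TEdge} (hE : E ⊆ E') (k : ℕ) : core E k ⊆ core E' k :=
  subset_core ((core_subset_verts E k).trans (verts_mono hE)) ((isCoreSet_core E k).mono hE)

lemma nbrs_core_eq_nbrs_coreEdges {E : Finset TEdge} {k v : ℕ} (hv : v ∈ core E k) :
    nbrs E (core E k) v = nbrs (coreEdges E k) (core E k) v := by
  refine (nbrs_mono (Finset.filter_subset _ E) _ v).antisymm' ?_
  refine Finset.monotone_filter_right _ fun _ _ ⟨hne, e, he⟩ => ⟨hne, e, ?_⟩
  rw [Finset.mem_filter] at he ⊢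
  refine ⟨Finset.mem_filter.mpr ⟨he.1, ?_⟩, he.2⟩
  rcases he.2 with ⟨h1, h2⟩ | ⟨h1, h2⟩ <;> rw [h1, h2] <;> tauto

lemma isCoreSet_coreEdges_core (E : Finset TEdge) (k : ℕ) :
    isCoreSet (coreEdges E k) k (core E k) := fun v hv =>
  (nbrs_core_eq_nbrs_coreEdges hv) ▸ isCoreSet_core E k v hv

lemma core_subset_verts_coreEdges (E : Finset TEdge) (k : ℕ) :
    core E k ⊆ verts (coreEdges E k) := by
  intro v hv
  rcases (nbrs E (core E k) v).eq_empty_or_nonempty with hisolated | ⟨u, hu⟩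
  · -- an isolated core vertex forces k = 0, and then all of `verts E` is the core
    have hk : k = 0 := by simpa [hisolated] using isCoreSet_core E k v hv
    have hall : verts E ⊆ core E k := subset_core le_rfl fun _ _ => hk ▸ Nat.zero_le _
    obtain ⟨e, he, hev⟩ := mem_verts.mp (core_subset_verts E k hv)
    refine mem_verts.mpr ⟨e, Finset.mem_filter.mpr ⟨he, hall ?_, hall ?_⟩, hev⟩ <;>
      exact mem_verts.mpr ⟨e, he, by simp⟩
  · rw [nbrs_core_eq_nbrs_coreEdges hv] at hu
    obtain ⟨-, -, e, he⟩ := Finset.mem_filter.mp hu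
    rw [Finset.mem_filter] at he
    exact mem_verts.mpr ⟨e, he.1, by omega⟩

theorem core_eq_of_coreEdges_subset {E E' : Finset TEdge} {k : ℕ} (hE : E' ⊆ E)
    (hcore : coreEdges E k ⊆ E') : core E' k = core E k :=
  (core_mono hE k).antisymm <|
    subset_core ((core_subset_verts_coreEdges E k).trans (verts_mono hcore))
      ((isCoreSet_coreEdges_core E k).mono hcore)

theorem coreEdges_eq_of_coreEdges_subset {E E' : Finset TEdge} {k : ℕ} (hE : E' ⊆ E)
    (hcore : coreEdges E k ⊆ E') : coreEdges E' k = coreEdges E k := by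
  ext e
  rw [coreEdges, core_eq_of_coreEdges_subset hE hcore, Finset.mem_filter]
  exact ⟨fun h => Finset.mem_filter.mpr ⟨hE h.1, h.2⟩,
    fun h => ⟨hcore h, (Finset.mem_filter.mp h).2⟩⟩

lemma projE_mono_right (E : Finset TEdge) (a : ℤ) {b b' : ℤ} (hb : b ≤ b') :
    projE E a b ⊆ projE E a b' :=
  Finset.monotone_filter_right E fun _ _ ⟨ha, hle⟩ => ⟨ha, hle.trans hb⟩

theorem stmt_8_general (E : Finset TEdge) (k : ℕ) (ts te te' : ℤ)
    (hmax : IsGreatest {t : ℤ | ∃ e ∈ coreE E k ts te, e.2.2 = t} te') :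
    ∀ c : ℤ, te' ≤ c → c < te → identCore E k ts c ts te := by
  intro c hc hct
  have hproj : projE E ts c ⊆ projE E ts te := projE_mono_right E ts hct.le
  have hcore : coreE E k ts te ⊆ projE E ts c := by
    intro e he
    obtain ⟨heE, hts, -⟩ := Finset.mem_filter.mp (Finset.filter_subset _ _ he)
    exact Finset.mem_filter.mpr ⟨heE, hts, (hmax.2 ⟨e, he, rfl⟩).trans hc⟩
  exact ⟨core_eq_of_coreEdges_subset hproj hcore, coreEdges_eq_of_coreEdges_subset hproj hcore⟩

/-- correctness of Pruning-on-the-Right: if the TTI [ts',te'] of the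
nonempty core T^k_[ts,te] satisfies te' < te, then for every c with te' ≤ c < te,
T^k_[ts,c] is identical to T^k_[ts,te]. -/
theorem stmt_8 (E : Finset TEdge) (k : ℕ) (ts te ts' te' : ℤ)
    (h : (coreE E k ts te).Nonempty)
    (hmin : IsLeast {t : ℤ | ∃ e ∈ coreE E k ts te, e.2.2 = t} ts')
    (hmax : IsGreatest {t : ℤ | ∃ e ∈ coreE E k ts te, e.2.2 = t} te')
    (hlt : te' < te) :
    ∀ c : ℤ, te' ≤ c → c < te → identCore E k ts c ts te :=
  stmt_8_general E k ts te te' hmax
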